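/- arXiv:2509.07263 — 3 statements merged into one kernel-verified Lean document; each statement's English description precedes it below -/
import Mathlib

section
/- There are no integers $n, a, c, d$ with $n \geq 7$ satisfying all three equations: (1) $2^{n-2} c = 2^{n-3} c + (n-3) \cdot 2^{n-4}$; (2) $2^{n-2} a = 2^{n-4} a + (n-4) \cdot 2^{n-5} c + (n-4)(n-5) \cdot 2^{n-7}$; (3) $(n-2) \cdot 2^{n-3} c + 2^{n-1} d = 2^{n-3} d + (n-3)(n-4) \cdot 2^{n-6}$. -/
theorem stmt_13 :
    ¬ ∃ (n : ℕ) (a c d : ℤ), 7 ≤ n ∧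
      2 ^ (n - 2) * c = 2 ^ (n - 3) * c + ((n : ℤ) - 3) * 2 ^ (n - 4) ∧
      2 ^ (n - 2) * a = 2 ^ (n - 4) * a + ((n : ℤ) - 4) * 2 ^ (n - 5) * c +
        ((n : ℤ) - 4) * ((n : ℤ) - 5) * 2 ^ (n - 7) ∧
      ((n : ℤ) - 2) * 2 ^ (n - 3) * c + 2 ^ (n - 1) * d =
        2 ^ (n - 3) * d + ((n : ℤ) - 3) * ((n : ℤ) - 4) * 2 ^ (n - 6) := by
  rintro ⟨n, a, c, d, hn, h1, h2, h3⟩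
  obtain ⟨m, rfl⟩ : ∃ m, n = m + 7 := ⟨n - 7, by omega⟩
  rw [show m + 7 - 2 = m + 5 from by omega, show m + 7 - 3 = m + 4 from by omega,
    show m + 7 - 4 = m + 3 from by omega] at h1
  rw [show m + 7 - 2 = m + 5 from by omega, show m + 7 - 4 = m + 3 from by omega,
    show m + 7 - 5 = m + 2 from by omega, show m + 7 - 7 = m from by omega] at h2
  rw [show m + 7 - 3 = m + 4 from by omega, show m + 7 - 1 = m + 6 from by omega,
    show m + 7 - 6 = m + 1 from by omega] at h3
  push_cast at h1 h2 h3
  set M : ℤ := (m : ℤ) with hM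
  have hP : (2:ℤ) ^ m ≠ 0 := by positivity
  have H1 : (2:ℤ) ^ m * (16 * c - 8 * (M + 4)) = 0 := by linear_combination h1
  have H2 : (2:ℤ) ^ m * (24 * a - 4 * (M + 3) * c - (M + 3) * (M + 2)) = 0 := by
    linear_combination h2
  have H3 : (2:ℤ) ^ m * (16 * (M + 5) * c + 48 * d - 2 * (M + 4) * (M + 3)) = 0 := by
    linear_combination h3
  have c1 : 16 * c - 8 * (M + 4) = 0 := by
    rcases mul_eq_zero.mp H1 with h | h
    · exact absurd h hP
    · exact h
  have c2 : 24 * a - 4 * (M + 3) * c - (M + 3) * (M + 2) = 0 := by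
    rcases mul_eq_zero.mp H2 with h | h
    · exact absurd h hP
    · exact h
  have c3 : 16 * (M + 5) * c + 48 * d - 2 * (M + 4) * (M + 3) = 0 := by
    rcases mul_eq_zero.mp H3 with h | h
    · exact absurd h hP
    · exact h
  have key : 96 * a + 96 * d + 80 * c = 8 := by
    linear_combination 4 * c2 + 2 * c3 - (M + 2) * c1
  omega
end

section
/- Let $A$ be the $\mathbb{Z}$-linear endomorphism of $\mathbb{Z}[\mu]/(\mu^n)$ induced by the ring homomorphism sending $\mu \mapsto \mu^2 + 2\mu$ (the Adams operation $\psi^2$). For $n \geq 5$, let $M$ be the $\mathbb{Z}$-submodule generated by $\mu^{n-4}, \mu^{n-3}, \mu^{n-2}, \mu^{n-1}$ and $N$ the submodule generated by $\mu^{n-2}, \mu^{n-1}$. Then $A$ maps $M$ into $M$ and $N$ into $N$, and there is no $\mathbb{Z}$-linear map $\phi : M \to N$ with $\phi(\mu^{n-2}) = \mu^{n-2}$, $\phi(\mu^{n-1}) = \mu^{n-1}$, and $\phi \circ A = A \circ \phi$ on $M$. -/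
open Polynomial Finset

lemma two_mul_choose_two' (k : ℕ) : 2 * k.choose 2 = k * (k - 1) := by
  induction k with
  | zero => rfl
  | succ m ih =>
    rw [Nat.choose_succ_succ, Nat.choose_one_right, Nat.mul_add, ih]
    cases m with
    | zero => rfl
    | succ j => simp only [Nat.succ_sub_one]; ring

lemma key_dvd (n k : ℕ) (hk : k ≤ n) :
    (X : Polynomial ℤ)^n ∣ (X^2 + 2*X)^k -
      ∑ i ∈ range (n - k), C ((k.choose i : ℤ) * 2^(k-i)) * X^(k+i) := by
  rw [X_pow_dvd_iff]
  intro d hd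
  have h1 : ((X:Polynomial ℤ)^2 + 2*X)^k = (X + C 2)^k * X^k := by
    rw [← mul_pow]; congr 1; simp [C_eq_natCast]; ring
  rw [coeff_sub, h1, coeff_mul_X_pow', finset_sum_coeff]
  simp only [coeff_C_mul, coeff_X_pow]
  by_cases h : k ≤ d
  · rw [Finset.sum_eq_single (d - k)]
    · rw [if_pos h, coeff_X_add_C_pow, if_pos (by omega : d = k + (d - k))]
      ring
    · intro i hi hne
      rw [if_neg (by omega), mul_zero]
    · intro hmem
      rw [if_neg (by simp only [mem_range] at hmem ⊢; omega), mul_zero]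
  · rw [if_neg h, Finset.sum_eq_zero, sub_zero]
    intro i hi
    rw [if_neg (by omega), mul_zero]

lemma expand_q (n k : ℕ) (hk : k ≤ n) :
    Ideal.Quotient.mk (Ideal.span {(X : Polynomial ℤ)^n}) ((X^2 + 2*X)^k) =
      ∑ i ∈ range (n - k),
        ((k.choose i : ℤ) * 2^(k-i)) •
          (Ideal.Quotient.mk (Ideal.span {(X : Polynomial ℤ)^n}) X)^(k+i) := by
  have h := Ideal.Quotient.eq.2 (Ideal.mem_span_singleton.2 (key_dvd n k hk))
  rw [h, map_sum]
  refine Finset.sum_congr rfl fun i _ => ?_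
  rw [map_mul, map_pow, zsmul_eq_mul,
    show (C ((k.choose i : ℤ) * 2^(k-i)) : Polynomial ℤ)
       = (((k.choose i : ℤ) * 2^(k-i) : ℤ) : Polynomial ℤ) from eq_intCast C _, map_intCast]

noncomputable def cf (n j : ℕ) (hj : j < n) :
    (Polynomial ℤ ⧸ Ideal.span {(X : Polynomial ℤ) ^ n}) →ₗ[ℤ] ℤ :=
  Submodule.liftQ ((Ideal.span {(X : Polynomial ℤ) ^ n}).restrictScalars ℤ)
    (Polynomial.lcoeff ℤ j)
    (by
      intro p hp
      rw [Submodule.restrictScalars_mem, Ideal.mem_span_singleton] at hp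
      obtain ⟨q, rfl⟩ := hp
      simp [lcoeff_apply, coeff_X_pow_mul', Nat.not_le.mpr hj])

lemma cf_mk (n j : ℕ) (hj : j < n) (p : Polynomial ℤ) :
    cf n j hj (Ideal.Quotient.mk _ p) = p.coeff j := rfl

set_option maxHeartbeats 1600000 in
theorem stmt_15 (n : ℕ) (hn : 5 ≤ n)
    (A : (Polynomial ℤ ⧸ Ideal.span {(X : Polynomial ℤ) ^ n}) →ₗ[ℤ]
         (Polynomial ℤ ⧸ Ideal.span {(X : Polynomial ℤ) ^ n}))
    (hA : ∀ p : Polynomial ℤ,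
      A (Ideal.Quotient.mk (Ideal.span {(X : Polynomial ℤ) ^ n}) p) =
        Ideal.Quotient.mk (Ideal.span {(X : Polynomial ℤ) ^ n})
          (p.comp (X ^ 2 + 2 * X))) :
    letI μ : Polynomial ℤ ⧸ Ideal.span {(X : Polynomial ℤ) ^ n} :=
      Ideal.Quotient.mk _ (X : Polynomial ℤ)
    letI M := Submodule.span ℤ {μ ^ (n - 4), μ ^ (n - 3), μ ^ (n - 2), μ ^ (n - 1)}
    letI N := Submodule.span ℤ {μ ^ (n - 2), μ ^ (n - 1)}
    (∀ x ∈ M, A x ∈ M) ∧ (∀ x ∈ N, A x ∈ N) ∧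
      ¬ ∃ φ : (Polynomial ℤ ⧸ Ideal.span {(X : Polynomial ℤ) ^ n}) →ₗ[ℤ]
              (Polynomial ℤ ⧸ Ideal.span {(X : Polynomial ℤ) ^ n}),
        (∀ x ∈ M, φ x ∈ N) ∧
        φ (μ ^ (n - 2)) = μ ^ (n - 2) ∧
        φ (μ ^ (n - 1)) = μ ^ (n - 1) ∧
        (∀ x ∈ M, φ (A x) = A (φ x)) := by
  have hmk : ∀ k : ℕ, (Ideal.Quotient.mk (Ideal.span {(X : Polynomial ℤ) ^ n}) (X : Polynomial ℤ)) ^ k =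
      Ideal.Quotient.mk (Ideal.span {(X : Polynomial ℤ) ^ n}) (X ^ k) := by
    intro k; rw [map_pow]
  have hAk : ∀ k : ℕ, k ≤ n → A ((Ideal.Quotient.mk (Ideal.span {(X : Polynomial ℤ) ^ n}) (X : Polynomial ℤ)) ^ k) =
      ∑ i ∈ range (n - k), ((k.choose i : ℤ) * 2^(k-i)) • (Ideal.Quotient.mk (Ideal.span {(X : Polynomial ℤ) ^ n}) (X : Polynomial ℤ)) ^ (k+i) := by
    intro k hk
    rw [hmk, hA, X_pow_comp, expand_q n k hk]
  -- expansions
  have hA1 : A ((Ideal.Quotient.mk (Ideal.span {(X : Polynomial ℤ) ^ n}) (X : Polynomial ℤ)) ^ (n-1)) = ((2:ℤ)^(n-1)) • (Ideal.Quotient.mk (Ideal.span {(X : Polynomial ℤ) ^ n}) (X : Polynomial ℤ)) ^ (n-1) := by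
    rw [hAk (n-1) (by omega), show n - (n-1) = 1 from by omega]
    simp
  have hA2 : A ((Ideal.Quotient.mk (Ideal.span {(X : Polynomial ℤ) ^ n}) (X : Polynomial ℤ)) ^ (n-2)) = ((2:ℤ)^(n-2)) • (Ideal.Quotient.mk (Ideal.span {(X : Polynomial ℤ) ^ n}) (X : Polynomial ℤ)) ^ (n-2)
      + (((n-2 : ℕ) : ℤ) * 2^(n-3)) • (Ideal.Quotient.mk (Ideal.span {(X : Polynomial ℤ) ^ n}) (X : Polynomial ℤ)) ^ (n-1) := by
    rw [hAk (n-2) (by omega), show n - (n-2) = 2 from by omega]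
    rw [Finset.sum_range_succ, Finset.sum_range_one]
    rw [show n-2+1 = n-1 from by omega, show n-2-1 = n-3 from by omega]
    simp
  have hA3 : A ((Ideal.Quotient.mk (Ideal.span {(X : Polynomial ℤ) ^ n}) (X : Polynomial ℤ)) ^ (n-3)) = ((2:ℤ)^(n-3)) • (Ideal.Quotient.mk (Ideal.span {(X : Polynomial ℤ) ^ n}) (X : Polynomial ℤ)) ^ (n-3)
      + (((n-3 : ℕ) : ℤ) * 2^(n-4)) • (Ideal.Quotient.mk (Ideal.span {(X : Polynomial ℤ) ^ n}) (X : Polynomial ℤ)) ^ (n-2)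
      + ((((n-3).choose 2 : ℕ) : ℤ) * 2^(n-5)) • (Ideal.Quotient.mk (Ideal.span {(X : Polynomial ℤ) ^ n}) (X : Polynomial ℤ)) ^ (n-1) := by
    rw [hAk (n-3) (by omega), show n - (n-3) = 3 from by omega]
    rw [Finset.sum_range_succ, Finset.sum_range_succ, Finset.sum_range_one]
    rw [show n-3+1 = n-2 from by omega, show n-3+2 = n-1 from by omega,
      show n-3-1 = n-4 from by omega, show n-3-2 = n-5 from by omega]
    simp
  have hA4 : A ((Ideal.Quotient.mk (Ideal.span {(X : Polynomial ℤ) ^ n}) (X : Polynomial ℤ)) ^ (n-4)) = ((2:ℤ)^(n-4)) • (Ideal.Quotient.mk (Ideal.span {(X : Polynomial ℤ) ^ n}) (X : Polynomial ℤ)) ^ (n-4)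
      + (((n-4 : ℕ) : ℤ) * 2^(n-5)) • (Ideal.Quotient.mk (Ideal.span {(X : Polynomial ℤ) ^ n}) (X : Polynomial ℤ)) ^ (n-3)
      + ((((n-4).choose 2 : ℕ) : ℤ) * 2^(n-4-2)) • (Ideal.Quotient.mk (Ideal.span {(X : Polynomial ℤ) ^ n}) (X : Polynomial ℤ)) ^ (n-2)
      + ((((n-4).choose 3 : ℕ) : ℤ) * 2^(n-4-3)) • (Ideal.Quotient.mk (Ideal.span {(X : Polynomial ℤ) ^ n}) (X : Polynomial ℤ)) ^ (n-1) := by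
    rw [hAk (n-4) (by omega), show n - (n-4) = 4 from by omega]
    rw [Finset.sum_range_succ, Finset.sum_range_succ, Finset.sum_range_succ,
      Finset.sum_range_one]
    rw [show n-4+1 = n-3 from by omega, show n-4+2 = n-2 from by omega,
      show n-4+3 = n-1 from by omega, show n-4-1 = n-5 from by omega]
    simp
  -- memberships of generators
  have m4 : (Ideal.Quotient.mk (Ideal.span {(X : Polynomial ℤ) ^ n}) (X : Polynomial ℤ)) ^ (n-4) ∈ Submodule.span ℤ {(Ideal.Quotient.mk (Ideal.span {(X : Polynomial ℤ) ^ n}) (X : Polynomial ℤ)) ^ (n - 4), (Ideal.Quotient.mk (Ideal.span {(X : Polynomial ℤ) ^ n}) (X : Polynomial ℤ)) ^ (n - 3), (Ideal.Quotient.mk (Ideal.span {(X : Polynomial ℤ) ^ n}) (X : Polynomial ℤ)) ^ (n - 2), (Ideal.Quotient.mk (Ideal.span {(X : Polynomial ℤ) ^ n}) (X : Polynomial ℤ)) ^ (n - 1)} := Submodule.subset_span (Set.mem_insert _ _)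
  have m3 : (Ideal.Quotient.mk (Ideal.span {(X : Polynomial ℤ) ^ n}) (X : Polynomial ℤ)) ^ (n-3) ∈ Submodule.span ℤ {(Ideal.Quotient.mk (Ideal.span {(X : Polynomial ℤ) ^ n}) (X : Polynomial ℤ)) ^ (n - 4), (Ideal.Quotient.mk (Ideal.span {(X : Polynomial ℤ) ^ n}) (X : Polynomial ℤ)) ^ (n - 3), (Ideal.Quotient.mk (Ideal.span {(X : Polynomial ℤ) ^ n}) (X : Polynomial ℤ)) ^ (n - 2), (Ideal.Quotient.mk (Ideal.span {(X : Polynomial ℤ) ^ n}) (X : Polynomial ℤ)) ^ (n - 1)} := Submodule.subset_span (Set.mem_insert_of_mem _ (Set.mem_insert _ _))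
  have m2 : (Ideal.Quotient.mk (Ideal.span {(X : Polynomial ℤ) ^ n}) (X : Polynomial ℤ)) ^ (n-2) ∈ Submodule.span ℤ {(Ideal.Quotient.mk (Ideal.span {(X : Polynomial ℤ) ^ n}) (X : Polynomial ℤ)) ^ (n - 4), (Ideal.Quotient.mk (Ideal.span {(X : Polynomial ℤ) ^ n}) (X : Polynomial ℤ)) ^ (n - 3), (Ideal.Quotient.mk (Ideal.span {(X : Polynomial ℤ) ^ n}) (X : Polynomial ℤ)) ^ (n - 2), (Ideal.Quotient.mk (Ideal.span {(X : Polynomial ℤ) ^ n}) (X : Polynomial ℤ)) ^ (n - 1)} := Submodule.subset_span (Set.mem_insert_of_mem _ (Set.mem_insert_of_mem _ (Set.mem_insert _ _)))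
  have m1 : (Ideal.Quotient.mk (Ideal.span {(X : Polynomial ℤ) ^ n}) (X : Polynomial ℤ)) ^ (n-1) ∈ Submodule.span ℤ {(Ideal.Quotient.mk (Ideal.span {(X : Polynomial ℤ) ^ n}) (X : Polynomial ℤ)) ^ (n - 4), (Ideal.Quotient.mk (Ideal.span {(X : Polynomial ℤ) ^ n}) (X : Polynomial ℤ)) ^ (n - 3), (Ideal.Quotient.mk (Ideal.span {(X : Polynomial ℤ) ^ n}) (X : Polynomial ℤ)) ^ (n - 2), (Ideal.Quotient.mk (Ideal.span {(X : Polynomial ℤ) ^ n}) (X : Polynomial ℤ)) ^ (n - 1)} := Submodule.subset_span (Set.mem_insert_of_mem _ (Set.mem_insert_of_mem _ (Set.mem_insert_of_mem _ (Set.mem_singleton _))))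
  have n2 : (Ideal.Quotient.mk (Ideal.span {(X : Polynomial ℤ) ^ n}) (X : Polynomial ℤ)) ^ (n-2) ∈ Submodule.span ℤ {(Ideal.Quotient.mk (Ideal.span {(X : Polynomial ℤ) ^ n}) (X : Polynomial ℤ)) ^ (n - 2), (Ideal.Quotient.mk (Ideal.span {(X : Polynomial ℤ) ^ n}) (X : Polynomial ℤ)) ^ (n - 1)} := Submodule.subset_span (Set.mem_insert _ _)
  have n1 : (Ideal.Quotient.mk (Ideal.span {(X : Polynomial ℤ) ^ n}) (X : Polynomial ℤ)) ^ (n-1) ∈ Submodule.span ℤ {(Ideal.Quotient.mk (Ideal.span {(X : Polynomial ℤ) ^ n}) (X : Polynomial ℤ)) ^ (n - 2), (Ideal.Quotient.mk (Ideal.span {(X : Polynomial ℤ) ^ n}) (X : Polynomial ℤ)) ^ (n - 1)} := Submodule.subset_span (Set.mem_insert_of_mem _ (Set.mem_singleton _))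
  have hAM : ∀ x ∈ Submodule.span ℤ {(Ideal.Quotient.mk (Ideal.span {(X : Polynomial ℤ) ^ n}) (X : Polynomial ℤ)) ^ (n - 4), (Ideal.Quotient.mk (Ideal.span {(X : Polynomial ℤ) ^ n}) (X : Polynomial ℤ)) ^ (n - 3), (Ideal.Quotient.mk (Ideal.span {(X : Polynomial ℤ) ^ n}) (X : Polynomial ℤ)) ^ (n - 2), (Ideal.Quotient.mk (Ideal.span {(X : Polynomial ℤ) ^ n}) (X : Polynomial ℤ)) ^ (n - 1)}, A x ∈ Submodule.span ℤ {(Ideal.Quotient.mk (Ideal.span {(X : Polynomial ℤ) ^ n}) (X : Polynomial ℤ)) ^ (n - 4), (Ideal.Quotient.mk (Ideal.span {(X : Polynomial ℤ) ^ n}) (X : Polynomial ℤ)) ^ (n - 3), (Ideal.Quotient.mk (Ideal.span {(X : Polynomial ℤ) ^ n}) (X : Polynomial ℤ)) ^ (n - 2), (Ideal.Quotient.mk (Ideal.span {(X : Polynomial ℤ) ^ n}) (X : Polynomial ℤ)) ^ (n - 1)} := by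
    intro x hx
    induction hx using Submodule.span_induction with
    | mem y hy =>
      simp only [Set.mem_insert_iff, Set.mem_singleton_iff] at hy
      rcases hy with rfl | rfl | rfl | rfl
      · rw [hA4]
        exact add_mem (add_mem (add_mem (Submodule.smul_mem _ _ m4)
          (Submodule.smul_mem _ _ m3)) (Submodule.smul_mem _ _ m2))
          (Submodule.smul_mem _ _ m1)
      · rw [hA3]
        exact add_mem (add_mem (Submodule.smul_mem _ _ m3)
          (Submodule.smul_mem _ _ m2)) (Submodule.smul_mem _ _ m1)
      · rw [hA2]
        exact add_mem (Submodule.smul_mem _ _ m2) (Submodule.smul_mem _ _ m1)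
      · rw [hA1]
        exact Submodule.smul_mem _ _ m1
    | zero => rw [map_zero]; exact Submodule.zero_mem _
    | add y z _ _ hy hz => rw [map_add]; exact add_mem hy hz
    | smul t y _ hy => rw [map_smul]; exact Submodule.smul_mem _ _ hy
  have hAN : ∀ x ∈ Submodule.span ℤ {(Ideal.Quotient.mk (Ideal.span {(X : Polynomial ℤ) ^ n}) (X : Polynomial ℤ)) ^ (n - 2), (Ideal.Quotient.mk (Ideal.span {(X : Polynomial ℤ) ^ n}) (X : Polynomial ℤ)) ^ (n - 1)}, A x ∈ Submodule.span ℤ {(Ideal.Quotient.mk (Ideal.span {(X : Polynomial ℤ) ^ n}) (X : Polynomial ℤ)) ^ (n - 2), (Ideal.Quotient.mk (Ideal.span {(X : Polynomial ℤ) ^ n}) (X : Polynomial ℤ)) ^ (n - 1)} := by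
    intro x hx
    induction hx using Submodule.span_induction with
    | mem y hy =>
      simp only [Set.mem_insert_iff, Set.mem_singleton_iff] at hy
      rcases hy with rfl | rfl
      · rw [hA2]
        exact add_mem (Submodule.smul_mem _ _ n2) (Submodule.smul_mem _ _ n1)
      · rw [hA1]
        exact Submodule.smul_mem _ _ n1
    | zero => rw [map_zero]; exact Submodule.zero_mem _
    | add y z _ _ hy hz => rw [map_add]; exact add_mem hy hz
    | smul t y _ hy => rw [map_smul]; exact Submodule.smul_mem _ _ hy
  refine ⟨hAM, hAN, ?_⟩
  rintro ⟨φ, hφN, hφ2, hφ1, hcomm⟩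
  obtain ⟨c, d, hcd⟩ := Submodule.mem_span_pair.1 (hφN _ m3)
  obtain ⟨a, b, hab⟩ := Submodule.mem_span_pair.1 (hφN _ m4)
  have h2lt : n - 2 < n := by omega
  have h1lt : n - 1 < n := by omega
  have vv : ∀ (j : ℕ) (hj : j < n) (m : ℕ),
      cf n j hj ((Ideal.Quotient.mk (Ideal.span {(X : Polynomial ℤ) ^ n}) (X : Polynomial ℤ)) ^ m) = if j = m then 1 else 0 := by
    intro j hj m
    rw [hmk m, cf_mk, coeff_X_pow]
  have w22 : cf n (n-2) h2lt ((Ideal.Quotient.mk (Ideal.span {(X : Polynomial ℤ) ^ n}) (X : Polynomial ℤ)) ^ (n-2)) = 1 := by rw [vv, if_pos rfl]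
  have w23 : cf n (n-2) h2lt ((Ideal.Quotient.mk (Ideal.span {(X : Polynomial ℤ) ^ n}) (X : Polynomial ℤ)) ^ (n-3)) = 0 := by rw [vv, if_neg (by omega)]
  have w21 : cf n (n-2) h2lt ((Ideal.Quotient.mk (Ideal.span {(X : Polynomial ℤ) ^ n}) (X : Polynomial ℤ)) ^ (n-1)) = 0 := by rw [vv, if_neg (by omega)]
  have w24 : cf n (n-2) h2lt ((Ideal.Quotient.mk (Ideal.span {(X : Polynomial ℤ) ^ n}) (X : Polynomial ℤ)) ^ (n-4)) = 0 := by rw [vv, if_neg (by omega)]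
  have w11 : cf n (n-1) h1lt ((Ideal.Quotient.mk (Ideal.span {(X : Polynomial ℤ) ^ n}) (X : Polynomial ℤ)) ^ (n-1)) = 1 := by rw [vv, if_pos rfl]
  have w12 : cf n (n-1) h1lt ((Ideal.Quotient.mk (Ideal.span {(X : Polynomial ℤ) ^ n}) (X : Polynomial ℤ)) ^ (n-2)) = 0 := by rw [vv, if_neg (by omega)]
  have w13 : cf n (n-1) h1lt ((Ideal.Quotient.mk (Ideal.span {(X : Polynomial ℤ) ^ n}) (X : Polynomial ℤ)) ^ (n-3)) = 0 := by rw [vv, if_neg (by omega)]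
  -- commutation equations
  have E3 := hcomm _ m3
  rw [hA3, map_add, map_add, map_smul, map_smul, map_smul, hφ2, hφ1, ← hcd,
    map_add, map_smul, map_smul, hA2, hA1] at E3
  have E4 := hcomm _ m4
  rw [hA4, map_add, map_add, map_add, map_smul, map_smul, map_smul, map_smul,
    hφ2, hφ1, ← hcd, ← hab, map_add, map_smul, map_smul, hA2, hA1] at E4
  have Ea := congrArg (cf n (n-2) h2lt) E3
  have Eb := congrArg (cf n (n-1) h1lt) E3
  have Ec := congrArg (cf n (n-2) h2lt) E4
  simp only [map_add, map_smul, w22, w23, w21, w24, smul_eq_mul, mul_one,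
    mul_zero, add_zero, zero_add] at Ea Ec
  simp only [map_add, map_smul, w11, w12, w13, smul_eq_mul, mul_one,
    mul_zero, add_zero, zero_add] at Eb
  -- rewrite powers in terms of 2^(n-5) and normalize casts
  have hp1 : (2:ℤ)^(n-1) = 16 * 2^(n-5) := by
    rw [show n-1 = n-5+4 from by omega, pow_add]; ring
  have hp2 : (2:ℤ)^(n-2) = 8 * 2^(n-5) := by
    rw [show n-2 = n-5+3 from by omega, pow_add]; ring
  have hp3 : (2:ℤ)^(n-3) = 4 * 2^(n-5) := by
    rw [show n-3 = n-5+2 from by omega, pow_add]; ring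
  have hp4 : (2:ℤ)^(n-4) = 2 * 2^(n-5) := by
    rw [show n-4 = n-5+1 from by omega, pow_add]; ring
  have hcast2 : ((n-2 : ℕ) : ℤ) = (n:ℤ)-2 := by omega
  have hcast3 : ((n-3 : ℕ) : ℤ) = (n:ℤ)-3 := by omega
  have hcast4 : ((n-4 : ℕ) : ℤ) = (n:ℤ)-4 := by omega
  rw [hp3, hp4, hp2, hcast3] at Ea
  rw [hp3, hp1, hcast2] at Eb
  rw [hp4, hp2, hcast4] at Ec
  have hch3 : (((n-3).choose 2 : ℕ) : ℤ) * 2 = ((n:ℤ)-3)*((n:ℤ)-4) := by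
    have h := two_mul_choose_two' (n-3)
    rw [show n-3-1 = n-4 from by omega] at h
    have h2 := congrArg (Nat.cast (R := ℤ)) h
    push_cast at h2
    rw [hcast3, hcast4] at h2
    linear_combination h2
  have hch4 : (((n-4).choose 2 : ℕ) : ℤ) * 2 = ((n:ℤ)-4)*((n:ℤ)-5) := by
    have h := two_mul_choose_two' (n-4)
    rw [show n-4-1 = n-5 from by omega] at h
    have h2 := congrArg (Nat.cast (R := ℤ)) h
    push_cast at h2
    rw [hcast4, show ((n-5 : ℕ) : ℤ) = (n:ℤ)-5 from by omega] at h2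
    linear_combination h2
  have h2t2 : (((n-4).choose 2 : ℕ) : ℤ) * 2^(n-4-2) * 2
      = (((n-4).choose 2 : ℕ) : ℤ) * 2^(n-5) := by
    by_cases h6 : 6 ≤ n
    · rw [show n-5 = (n-4-2)+1 from by omega, pow_add]; ring
    · have h5 : n = 5 := by omega
      subst h5
      norm_num [Nat.choose]
  have hP : (2:ℤ)^(n-5) ≠ 0 := pow_ne_zero _ two_ne_zero
  have f1 : ((n:ℤ)-3)*2 = c*4 := mul_left_cancel₀ hP (by linear_combination Ea)
  have f2 : 24*d = ((n:ℤ)-3)*((n:ℤ)-4) - 4*((n:ℤ)-2)*((n:ℤ)-3) :=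
    mul_left_cancel₀ hP (by
      linear_combination (-2 : ℤ)*Eb + (2:ℤ)^(n-5)*hch3 + 2*(2:ℤ)^(n-5)*((n:ℤ)-2)*f1)
  have f3 : 24*a = 2*((n:ℤ)-4)*((n:ℤ)-3) + ((n:ℤ)-4)*((n:ℤ)-5) :=
    mul_left_cancel₀ hP (by
      linear_combination (-4 : ℤ)*Ec + 2*h2t2 + (2:ℤ)^(n-5)*hch4
        - (2:ℤ)^(n-5)*((n:ℤ)-4)*f1)
  have h2 : (2:ℤ) = 3*(8*a - 8*d - 2*(n:ℤ)^2 + 12*(n:ℤ) - 18) := by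
    linear_combination f2 - f3
  have h3 : (3:ℤ) ∣ 2 := ⟨_, h2⟩
  norm_num at h3
end

section
/- Let $A$ be the $\mathbb{Z}$-linear endomorphism of $\mathbb{Z}[\mu]/(\mu^n)$ induced by $\mu \mapsto \mu^2 + 2\mu$. For $n \geq 4$, let $M$ be the $\mathbb{Z}$-submodule generated by $\mu^{n-3}, \mu^{n-2}, \mu^{n-1}$ and $N$ the submodule generated by $\mu^{n-2}, \mu^{n-1}$. If there exists a $\mathbb{Z}$-linear map $\phi : M \to N$ with $\phi(\mu^{n-2}) = \mu^{n-2}$, $\phi(\mu^{n-1}) = \mu^{n-1}$, and $\phi \circ A = A \circ \phi$ on $M$, then $n \equiv 3 \pmod{24}$. -/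
open Polynomial

private lemma aux_choose_two (m : ℕ) : 2 * m.choose 2 = m * (m - 1) := by
  cases m with
  | zero => rfl
  | succ k =>
    rw [Nat.choose_two_right, Nat.mul_div_cancel']
    rw [Nat.succ_sub_one, mul_comm]
    exact (Nat.even_mul_succ_self k).two_dvd

private lemma cubic_trunc (k : ℕ) :
    (X : ℤ[X]) ^ 3 ∣ (X + C 2) ^ k -
      (C ((2:ℤ) ^ k) + C ((k : ℤ) * 2 ^ (k - 1)) * X +
        C ((k.choose 2 : ℤ) * 2 ^ (k - 2)) * X ^ 2) := by
  rw [X_pow_dvd_iff]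
  intro d hd
  rw [coeff_sub, coeff_X_add_C_pow, coeff_add, coeff_add, coeff_C, coeff_C_mul, coeff_C_mul,
    coeff_X, coeff_X_pow]
  interval_cases d <;> simp [Nat.choose_one_right, mul_comm]

private lemma mk_pow_zero (n m : ℕ) (h : n ≤ m) :
    Ideal.Quotient.mk (Ideal.span {(X : ℤ[X]) ^ n}) (X ^ m) = 0 :=
  Ideal.Quotient.eq_zero_iff_mem.2 (Ideal.mem_span_singleton.2 (pow_dvd_pow X h))

private lemma mkpow (n k : ℕ) (hk : n ≤ k + 3) :
    Ideal.Quotient.mk (Ideal.span {(X : ℤ[X]) ^ n}) ((X ^ 2 + 2 * X) ^ k) =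
      ((2:ℤ) ^ k) • Ideal.Quotient.mk (Ideal.span {(X : ℤ[X]) ^ n}) (X ^ k) +
      ((k : ℤ) * 2 ^ (k - 1)) • Ideal.Quotient.mk (Ideal.span {(X : ℤ[X]) ^ n}) (X ^ (k + 1)) +
      ((k.choose 2 : ℤ) * 2 ^ (k - 2)) •
        Ideal.Quotient.mk (Ideal.span {(X : ℤ[X]) ^ n}) (X ^ (k + 2)) := by
  rw [← map_zsmul, ← map_zsmul, ← map_zsmul, ← map_add, ← map_add, Ideal.Quotient.eq,
    Ideal.mem_span_singleton]
  have h2 : (2 : ℤ[X]) = C 2 := by norm_num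
  have key : ((X ^ 2 + 2 * X : ℤ[X]) ^ k -
      (((2:ℤ) ^ k) • X ^ k + ((k : ℤ) * 2 ^ (k - 1)) • X ^ (k + 1) +
        ((k.choose 2 : ℤ) * 2 ^ (k - 2)) • X ^ (k + 2))) =
      X ^ k * ((X + C 2) ^ k -
        (C ((2:ℤ) ^ k) + C ((k : ℤ) * 2 ^ (k - 1)) * X +
          C ((k.choose 2 : ℤ) * 2 ^ (k - 2)) * X ^ 2)) := by
    rw [show (X ^ 2 + 2 * X : ℤ[X]) = X * (X + C 2) by rw [← h2]; ring, mul_pow]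
    simp only [smul_eq_C_mul]
    ring
  rw [key]
  exact dvd_trans (pow_dvd_pow X hk) (by rw [pow_add]; exact mul_dvd_mul_left _ (cubic_trunc k))

private lemma indep (n : ℕ) (hn : 4 ≤ n) (a b : ℤ)
    (h : a • Ideal.Quotient.mk (Ideal.span {(X : ℤ[X]) ^ n}) (X ^ (n - 2)) +
         b • Ideal.Quotient.mk (Ideal.span {(X : ℤ[X]) ^ n}) (X ^ (n - 1)) = 0) :
    a = 0 ∧ b = 0 := by
  rw [← map_zsmul, ← map_zsmul, ← map_add, Ideal.Quotient.eq_zero_iff_mem,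
    Ideal.mem_span_singleton] at h
  have hp : (a • X ^ (n - 2) + b • X ^ (n - 1) : ℤ[X]) = 0 := by
    refine eq_zero_of_dvd_of_degree_lt h ?_
    rw [degree_X_pow]
    refine lt_of_le_of_lt (degree_add_le _ _) (max_lt ?_ ?_) <;>
      refine lt_of_le_of_lt (degree_smul_le _ _) ?_ <;>
      rw [degree_X_pow] <;> exact_mod_cast by omega
  constructor
  · have := congrArg (fun p => Polynomial.coeff p (n - 2)) hp
    simpa [coeff_smul, coeff_X_pow, show ¬ (n-1 = n-2) by omega, show ¬ (n-2 = n-1) by omega, show ¬ (n-1 = n-2) by omega] using this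
  · have := congrArg (fun p => Polynomial.coeff p (n - 1)) hp
    simpa [coeff_smul, coeff_X_pow, show ¬ (n-2 = n-1) by omega, show ¬ (n-1 = n-2) by omega] using this

private lemma zmod_aux : ∀ x : ZMod 12, x * (5 + 6 * x) = 0 → x = 0 := by decide

set_option maxHeartbeats 1000000 in
theorem stmt_16 (n : ℕ) (hn : 4 ≤ n)
    (A : (Polynomial ℤ ⧸ Ideal.span {(X : Polynomial ℤ) ^ n}) →ₗ[ℤ]
         (Polynomial ℤ ⧸ Ideal.span {(X : Polynomial ℤ) ^ n}))
    (hA : ∀ p : Polynomial ℤ,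
      A (Ideal.Quotient.mk (Ideal.span {(X : Polynomial ℤ) ^ n}) p) =
        Ideal.Quotient.mk (Ideal.span {(X : Polynomial ℤ) ^ n})
          (p.comp (X ^ 2 + 2 * X)))
    (hφ : letI μ : Polynomial ℤ ⧸ Ideal.span {(X : Polynomial ℤ) ^ n} :=
        Ideal.Quotient.mk _ (X : Polynomial ℤ)
      letI M := Submodule.span ℤ {μ ^ (n - 3), μ ^ (n - 2), μ ^ (n - 1)}
      letI N := Submodule.span ℤ {μ ^ (n - 2), μ ^ (n - 1)}
      ∃ φ : (Polynomial ℤ ⧸ Ideal.span {(X : Polynomial ℤ) ^ n}) →ₗ[ℤ]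
            (Polynomial ℤ ⧸ Ideal.span {(X : Polynomial ℤ) ^ n}),
        (∀ x ∈ M, φ x ∈ N) ∧
        φ (μ ^ (n - 2)) = μ ^ (n - 2) ∧
        φ (μ ^ (n - 1)) = μ ^ (n - 1) ∧
        (∀ x ∈ M, φ (A x) = A (φ x))) :
    (n : ℤ) ≡ 3 [ZMOD 24] := by
  obtain ⟨φ, hMN, hφ2, hφ1, hcomm⟩ := hφ
  set mk := Ideal.Quotient.mk (Ideal.span {(X : Polynomial ℤ) ^ n}) with hmkdef
  have hμ : ∀ k : ℕ, (mk X) ^ k = mk (X ^ k) := fun k => (map_pow mk X k).symm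
  have hAk : ∀ k : ℕ, A (mk (X ^ k)) = mk ((X ^ 2 + 2 * X) ^ k) := fun k => by
    rw [hmkdef, hA, X_pow_comp]
  have hmem : (mk X) ^ (n - 3) ∈
      Submodule.span ℤ {(mk X) ^ (n - 3), (mk X) ^ (n - 2), (mk X) ^ (n - 1)} :=
    Submodule.subset_span (Set.mem_insert _ _)
  obtain ⟨c, d, hc⟩ := Submodule.mem_span_pair.1 (hMN _ hmem)
  have E3 : A ((mk X) ^ (n - 3)) =
      ((2:ℤ) ^ (n - 3)) • (mk X) ^ (n - 3) +
      (((n - 3 : ℕ) : ℤ) * 2 ^ (n - 4)) • (mk X) ^ (n - 2) +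
      ((((n - 3).choose 2 : ℕ) : ℤ) * 2 ^ (n - 5)) • (mk X) ^ (n - 1) := by
    rw [hμ (n - 3), hAk, mkpow n (n - 3) (by omega), show n - 3 + 1 = n - 2 by omega,
      show n - 3 + 2 = n - 1 by omega, show n - 3 - 1 = n - 4 by omega,
      show n - 3 - 2 = n - 5 by omega, ← hμ, ← hμ, ← hμ]
  have E2 : A ((mk X) ^ (n - 2)) =
      ((2:ℤ) ^ (n - 2)) • (mk X) ^ (n - 2) +
      (((n - 2 : ℕ) : ℤ) * 2 ^ (n - 3)) • (mk X) ^ (n - 1) := by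
    rw [hμ (n - 2), hAk, mkpow n (n - 2) (by omega), show n - 2 + 1 = n - 1 by omega,
      show n - 2 - 1 = n - 3 by omega, mk_pow_zero n (n - 2 + 2) (by omega), smul_zero,
      add_zero, ← hμ, ← hμ]
  have E1 : A ((mk X) ^ (n - 1)) = ((2:ℤ) ^ (n - 1)) • (mk X) ^ (n - 1) := by
    rw [hμ (n - 1), hAk, mkpow n (n - 1) (by omega), mk_pow_zero n (n - 1 + 1) (by omega),
      mk_pow_zero n (n - 1 + 2) (by omega), smul_zero, smul_zero, add_zero, add_zero, ← hμ]
  have key := hcomm ((mk X) ^ (n - 3)) hmem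
  rw [E3, map_add, map_add, map_smul, map_smul, map_smul, hφ2, hφ1, ← hc, map_add, map_smul,
    map_smul, E2, E1] at key
  have heq : ((2:ℤ) ^ (n - 3) * c + ((n - 3 : ℕ) : ℤ) * 2 ^ (n - 4) - 2 ^ (n - 2) * c) •
        (mk X) ^ (n - 2) +
      ((2:ℤ) ^ (n - 3) * d + (((n - 3).choose 2 : ℕ) : ℤ) * 2 ^ (n - 5) -
        ((n - 2 : ℕ) : ℤ) * 2 ^ (n - 3) * c - 2 ^ (n - 1) * d) • (mk X) ^ (n - 1) = 0 := by
    simp only [zsmul_eq_mul] at key ⊢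
    push_cast at key ⊢
    linear_combination key
  rw [hμ, hμ] at heq
  obtain ⟨eqA, eqB⟩ := indep n hn _ _ heq
  -- derive n - 3 = 2c
  have hcast3 : ((n - 3 : ℕ) : ℤ) = (n : ℤ) - 3 := by omega
  have hc2 : (n : ℤ) - 3 = 2 * c := by
    have h34 : (2:ℤ) ^ (n - 3) = 2 ^ (n - 4) * 2 := by
      rw [← pow_succ]; congr 1; omega
    have h24 : (2:ℤ) ^ (n - 2) = 2 ^ (n - 4) * 4 := by
      rw [show n - 2 = n - 4 + 2 by omega]; ring
    have hz : (2:ℤ) ^ (n - 4) * (((n : ℤ) - 3) - 2 * c) = 0 := by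
      rw [h34, h24, hcast3] at eqA
      linear_combination eqA
    rcases mul_eq_zero.1 hz with h | h
    · exact absurd h (pow_ne_zero _ two_ne_zero)
    · linarith
  have hn5 : 5 ≤ n := by
    rcases Nat.lt_or_ge n 5 with h | h
    · have : n = 4 := by omega
      subst this
      norm_num at hc2
      omega
    · exact h
  -- derive choose equation
  have C2 : (((n - 3).choose 2 : ℕ) : ℤ) = 4 * ((n : ℤ) - 2) * c + 12 * d := by
    have h35 : (2:ℤ) ^ (n - 3) = 2 ^ (n - 5) * 4 := by
      rw [show n - 3 = n - 5 + 2 by omega]; ring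
    have h15 : (2:ℤ) ^ (n - 1) = 2 ^ (n - 5) * 16 := by
      rw [show n - 1 = n - 5 + 4 by omega]; ring
    have hcast2 : ((n - 2 : ℕ) : ℤ) = (n : ℤ) - 2 := by omega
    have hz : (2:ℤ) ^ (n - 5) *
        ((((n - 3).choose 2 : ℕ) : ℤ) - 4 * ((n : ℤ) - 2) * c - 12 * d) = 0 := by
      rw [h35, h15, hcast2] at eqB
      linear_combination eqB
    rcases mul_eq_zero.1 hz with h | h
    · exact absurd h (pow_ne_zero _ two_ne_zero)
    · linarith
  have hch : 2 * (((n - 3).choose 2 : ℕ) : ℤ) = ((n : ℤ) - 3) * ((n : ℤ) - 4) := by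
    have h := aux_choose_two (n - 3)
    rw [show n - 3 - 1 = n - 4 by omega] at h
    calc 2 * (((n - 3).choose 2 : ℕ) : ℤ) = ((2 * (n - 3).choose 2 : ℕ) : ℤ) := by push_cast; ring
      _ = (((n - 3) * (n - 4) : ℕ) : ℤ) := by rw [h]
      _ = ((n : ℤ) - 3) * ((n : ℤ) - 4) := by
          push_cast
          rw [show ((n - 3 : ℕ) : ℤ) = (n : ℤ) - 3 by omega,
            show ((n - 4 : ℕ) : ℤ) = (n : ℤ) - 4 by omega]
  have h24 : 2 * (c * (5 + 6 * c)) = 24 * (-d) := by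
    linear_combination (-2 : ℤ) * C2 + hch + ((n : ℤ) - 4 - 6 * c) * hc2
  have hdvd : (12 : ℤ) ∣ c * (5 + 6 * c) := ⟨-d, by linarith⟩
  have h0 : ((c * (5 + 6 * c) : ℤ) : ZMod 12) = 0 :=
    (ZMod.intCast_zmod_eq_zero_iff_dvd _ 12).2 hdvd
  push_cast at h0
  have hc0 : ((c : ZMod 12)) = 0 := zmod_aux _ h0
  obtain ⟨e, he⟩ := (ZMod.intCast_zmod_eq_zero_iff_dvd c 12).1 hc0
  rw [Int.ModEq]
  have : (n : ℤ) - 3 = 24 * e := by rw [hc2, he]; ring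
  omega
end
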